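/- A minimal Dörfler marked set consists of elements with the largest indicators: if T is finite, η : T → ℝ_{≥0}, θ ∈ (0,1), then there exists a subset M of minimal cardinality satisfying Σ_{T∈M} η²(T) ≥ θ Σ_{T∈T} η²(T), and such an M can be chosen so that min_{T∈M} η(T) ≥ max_{T∉M} η(T). -/

import Mathlib

/-!
Let `k` be the least cardinality of a Dörfler set and pick, among all `k`-element subsets
of `T`, one maximising `∑ η²`; its sum dominates that of a minimal Dörfler set, so it is itself
a minimal Dörfler set. Exchanging a marked element for an unmarked one with a larger indicator
would keep the cardinality and increase the sum, so no such pair exists.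
-/

open Finset

lemma Finset.exists_subset_minimal_card {α : Type*} {T : Finset α} {p : Finset α → Prop}
    (hT : p T) : ∃ M ⊆ T, p M ∧ ∀ M' ⊆ T, p M' → M.card ≤ M'.card := by
  classical
  obtain ⟨M, hM, hmin⟩ := (T.powerset.filter p).exists_min_image card
    ⟨T, mem_filter.2 ⟨mem_powerset_self T, hT⟩⟩
  rw [mem_filter, mem_powerset] at hM
  exact ⟨M, hM.1, hM.2, fun M' hM'T hM' =>
    hmin M' (mem_filter.2 ⟨mem_powerset.2 hM'T, hM'⟩)⟩

lemma Finset.le_of_forall_sum_le_of_card_eq {α β : Type*} [DecidableEq α] [AddCommGroup β]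
    [PartialOrder β] [IsOrderedAddMonoid β] {f : α → β} {T M : Finset α} (hMT : M ⊆ T)
    (hmax : ∀ M' ⊆ T, M'.card = M.card → ∑ x ∈ M', f x ≤ ∑ x ∈ M, f x)
    {t s : α} (ht : t ∈ M) (hs : s ∈ T) (hsM : s ∉ M) : f s ≤ f t := by
  have hs' : s ∉ M.erase t := fun h => hsM (mem_of_mem_erase h)
  have hswap := hmax (insert s (M.erase t))
    (insert_subset hs ((erase_subset t M).trans hMT)) ?_
  · rwa [sum_insert hs', ← add_sum_erase M f ht, add_le_add_iff_right] at hswap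
  · rw [card_insert_of_notMem hs', card_erase_add_one ht]

theorem stmt_15_general {α : Type*} (T : Finset α) (η : α → ℝ)
    (hη : ∀ t, 0 ≤ η t) (θ : ℝ) (hθ : θ ∈ Set.Ioo (0 : ℝ) 1) :
    ∃ M : Finset α, M ⊆ T ∧ (θ * ∑ t ∈ T, η t ^ 2 ≤ ∑ t ∈ M, η t ^ 2) ∧
      (∀ M' : Finset α, M' ⊆ T →
        θ * ∑ t ∈ T, η t ^ 2 ≤ ∑ t ∈ M', η t ^ 2 → M.card ≤ M'.card) ∧
      ∀ t ∈ M, ∀ s ∈ T, s ∉ M → η s ≤ η t := by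
  classical
  set S := ∑ t ∈ T, η t ^ 2
  have hT : θ * S ≤ S := mul_le_of_le_one_left (sum_nonneg fun t _ => sq_nonneg (η t)) hθ.2.le
  obtain ⟨M₀, hM₀T, hM₀, hmin⟩ :=
    exists_subset_minimal_card (p := (θ * S ≤ ∑ t ∈ ·, η t ^ 2)) hT
  obtain ⟨M, hM, hmax⟩ := (T.powersetCard M₀.card).exists_max_image (∑ t ∈ ·, η t ^ 2)
    (powersetCard_nonempty.2 (card_le_card hM₀T))
  rw [mem_powersetCard] at hM
  have hmax' : ∀ M' ⊆ T, M'.card = M.card →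
      ∑ t ∈ M', η t ^ 2 ≤ ∑ t ∈ M, η t ^ 2 :=
    fun M' hM'T hM' => hmax M' (mem_powersetCard.2 ⟨hM'T, hM'.trans hM.2⟩)
  refine ⟨M, hM.1, hM₀.trans (hmax' M₀ hM₀T hM.2.symm), fun M' hM'T hM' => ?_,
    fun t ht s hs hsM => ?_⟩
  · exact hM.2 ▸ hmin M' hM'T hM'
  · exact (pow_le_pow_iff_left₀ (hη s) (hη t) two_ne_zero).1
      (le_of_forall_sum_le_of_card_eq hM.1 hmax' ht hs hsM)

/-- A minimal Dörfler marked set can be chosen to consist of elements with the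
largest error indicators. -/
theorem stmt_15 {α : Type*} [DecidableEq α] (T : Finset α) (η : α → ℝ)
    (hη : ∀ t, 0 ≤ η t) (θ : ℝ) (hθ : θ ∈ Set.Ioo (0 : ℝ) 1) :
    ∃ M : Finset α, M ⊆ T ∧ (θ * ∑ t ∈ T, η t ^ 2 ≤ ∑ t ∈ M, η t ^ 2) ∧
      (∀ M' : Finset α, M' ⊆ T →
        θ * ∑ t ∈ T, η t ^ 2 ≤ ∑ t ∈ M', η t ^ 2 → M.card ≤ M'.card) ∧
      ∀ t ∈ M, ∀ s ∈ T, s ∉ M → η s ≤ η t :=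
  stmt_15_general T η hη θ hθ
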